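/- Let (X, 𝕌) be a locally compact Hausdorff uniform space. The map sending each sequence x with nonempty I^K-cluster set to C_x(I^K) is continuous from the space of such sequences (with the sup-uniformity) to the nonempty closed subsets of X with the lower Vietoris topology. -/

import Mathlib

open Set Topology

attribute [local instance] Classical.propDecidable

variable {S X : Type*}

/-- An ideal on a set: family of subsets closed under subsets and finite unions. -/
def IsIdeal (I : Set (Set S)) : Prop :=
  ∅ ∈ I ∧ (∀ ⦃A B : Set S⦄, A ∈ I → B ⊆ A → B ∈ I) ∧
    ∀ ⦃A B : Set S⦄, A ∈ I → B ∈ I → A ∪ B ∈ I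

/-- An admissible ideal: nontrivial ideal containing all singletons. -/
def IsAdmissible (I : Set (Set S)) : Prop :=
  IsIdeal I ∧ Set.univ ∉ I ∧ ∀ s : S, {s} ∈ I

/-- `x` is an `I^K`-cluster point of `f`: there is `M ∈ F(I)` (i.e. `Mᶜ ∈ I`) such that
the function equal to `f` on `M` and constantly `x` off `M` has `x` as a `K`-cluster point. -/
def IKClusterPt [TopologicalSpace X] (I K : Set (Set S)) (f : S → X) (x : X) : Prop :=
  ∃ M : Set S, Mᶜ ∈ I ∧ ∀ U : Set X, IsOpen U → x ∈ U →
    {s : S | (if s ∈ M then f s else x) ∈ U} ∉ K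

/-!
A `K`-cluster point is a cluster point along the filter `{A | Aᶜ ∈ K}`, so `p` is an
`I^K`-cluster point of `x` iff it is a cluster point of `x` modified to `p` off some `M ∈ F(I)`.
Along any filter, cluster points in a locally compact uniform space survive small uniform
perturbations: if `C ⊆ O` is a compact neighbourhood of the cluster point `p`, a uniformly close
`y` frequently visits `C` and therefore clusters somewhere in `C`. For `y` close to `x` the
sequences modified with the same `M` and `p` are just as close, and the resulting cluster point
`q` of the modified `y` is still one after replacing `p` by `q` off `M`.
-/

namespace IsIdeal

variable {K : Set (Set S)}

def dualFilter (hK : IsIdeal K) : Filter S :=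
  Filter.comk (· ∈ K) hK.1 (fun _ ht _ hst => hK.2.1 ht hst) (fun _ hs _ ht => hK.2.2 hs ht)

theorem frequently_dualFilter_iff (hK : IsIdeal K) {P : S → Prop} :
    (∃ᶠ s in hK.dualFilter, P s) ↔ {s | P s} ∉ K := by
  simp only [Filter.Frequently, dualFilter, Filter.eventually_iff, Filter.mem_comk, compl_ofPred,
    not_not]

end IsIdeal

theorem ikClusterPt_iff_mapClusterPt [TopologicalSpace X] {I K : Set (Set S)} (hK : IsIdeal K)
    {f : S → X} {p : X} :
    IKClusterPt I K f p ↔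
      ∃ M : Set S, Mᶜ ∈ I ∧ MapClusterPt p hK.dualFilter (fun s => if s ∈ M then f s else p) := by
  simp only [IKClusterPt, (nhds_basis_opens p).mapClusterPt_iff_frequently,
    hK.frequently_dualFilter_iff, and_imp]
  exact exists_congr fun M => and_congr_right fun _ => forall_congr' fun U => forall_comm

theorem MapClusterPt.ite_self [TopologicalSpace X] {F : Filter S} {M : Set S} {f : S → X}
    {p q : X} (h : MapClusterPt q F (fun s => if s ∈ M then f s else p)) :
    MapClusterPt q F (fun s => if s ∈ M then f s else q) := by
  refine mapClusterPt_iff_frequently.mpr fun U hU => ?_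
  refine (mapClusterPt_iff_frequently.mp h U hU).mono fun s hs => ?_
  split_ifs at hs ⊢
  exacts [hs, mem_of_mem_nhds hU]

theorem MapClusterPt.exists_mem_of_uniformly_close [UniformSpace X] [LocallyCompactSpace X]
    {F : Filter S} {x : S → X} {p : X} {O : Set X} (hp : MapClusterPt p F x) (hO : O ∈ 𝓝 p) :
    ∃ V ∈ uniformity X, ∀ y : S → X, (∀ s, (x s, y s) ∈ V) → ∃ q ∈ O, MapClusterPt q F y := by
  obtain ⟨C, hC, hCO, hCcomp⟩ := LocallyCompactSpace.local_compact_nhds p O hO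
  obtain ⟨W, hW, hWC⟩ := UniformSpace.mem_nhds_iff.mp hC
  obtain ⟨V, hV, hVW⟩ := comp_mem_uniformity_sets hW
  refine ⟨V, hV, fun y hxy => ?_⟩
  have hyC : ∃ᶠ s in F, y s ∈ C :=
    (hp.frequently (UniformSpace.ball_mem_nhds p hV)).mono fun s hs =>
      hWC (hVW (UniformSpace.mem_ball_comp hs (hxy s)))
  obtain ⟨q, hqC, hq⟩ := hCcomp.exists_mapClusterPt_of_frequently hyC
  exact ⟨q, hCO hqC, hq⟩

theorem gamma_lowerVietoris_continuous_general [UniformSpace X] [LocallyCompactSpace X]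
    (I K : Set (Set ℕ)) (hK : IsIdeal K) :
    ∀ x : ℕ → X, {p : X | IKClusterPt I K x p}.Nonempty →
      ∀ O : Set X, IsOpen O → ({p : X | IKClusterPt I K x p} ∩ O).Nonempty →
        ∃ V ∈ uniformity X, ∀ y : ℕ → X, {p : X | IKClusterPt I K y p}.Nonempty →
          (∀ n, (x n, y n) ∈ V) → ({p : X | IKClusterPt I K y p} ∩ O).Nonempty := by
  intro x _ O hO ⟨p, hp, hpO⟩
  obtain ⟨M, hMI, hpx⟩ := (ikClusterPt_iff_mapClusterPt hK).mp hp
  obtain ⟨V, hV, hVcl⟩ := hpx.exists_mem_of_uniformly_close (hO.mem_nhds hpO)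
  refine ⟨V, hV, fun y _ hxy => ?_⟩
  have hclose : ∀ n, ((if n ∈ M then x n else p), (if n ∈ M then y n else p)) ∈ V := fun n => by
    split_ifs
    exacts [hxy n, refl_mem_uniformity hV]
  obtain ⟨q, hqO, hq⟩ := hVcl _ hclose
  exact ⟨q, (ikClusterPt_iff_mapClusterPt hK).mpr ⟨M, hMI, hq.ite_self⟩, hqO⟩

theorem gamma_lowerVietoris_continuous [UniformSpace X] [T2Space X] [LocallyCompactSpace X]
    (I K : Set (Set ℕ)) (hI : IsIdeal I) (hK : IsIdeal K) :
    ∀ x : ℕ → X, {p : X | IKClusterPt I K x p}.Nonempty →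
      ∀ O : Set X, IsOpen O → ({p : X | IKClusterPt I K x p} ∩ O).Nonempty →
        ∃ V ∈ uniformity X, ∀ y : ℕ → X, {p : X | IKClusterPt I K y p}.Nonempty →
          (∀ n, (x n, y n) ∈ V) → ({p : X | IKClusterPt I K y p} ∩ O).Nonempty :=
  gamma_lowerVietoris_continuous_general I K hK
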